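/- Let ε > 0, let t_0 < t_1 be real numbers, let U : ℝ^n → ℝ and V : [t_0,t_1] × ℝ^n → ℝ be smooth, and set A^m φ := ( −∇U·∇φ + ε Δφ )/2 (spatial derivatives). Let f, g : [t_0,t_1] × ℝ^n → (0,∞) be smooth and satisfy −∂_t f + A^m f + (V/ε) f = 0 and ∂_t g + A^m g + (V/ε) g = 0. Define m := exp(−U/ε), q := f g m and θ := (ε/2)(log g − log f). Then on [t_0,t_1] × ℝ^n: ∂_t q + ∇·( q ∇θ ) = 0 and ∂_t θ + ‖∇θ‖²/2 + V − ε² ( Q(q|Leb) − Q(m|Leb) ) = 0, where Q(q|Leb) := −Δ√q/(2√q) and Q(m|Leb) := −Δ√m/(2√m). -/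

import Mathlib

open scoped BigOperators RealInnerProductSpace

noncomputable section

/-- The Laplacian on `ℝ^n`, as the sum of the second partial derivatives. -/
def lap {n : ℕ} (f : EuclideanSpace ℝ (Fin n) → ℝ) (y : EuclideanSpace ℝ (Fin n)) : ℝ :=
  ∑ j, fderiv ℝ (fun z => fderiv ℝ f z (EuclideanSpace.single j 1)) y (EuclideanSpace.single j 1)

/-- The divergence `∇·v` of a vector field `v` on `ℝ^n`. -/
def divg {n : ℕ} (v : EuclideanSpace ℝ (Fin n) → EuclideanSpace ℝ (Fin n))
    (y : EuclideanSpace ℝ (Fin n)) : ℝ :=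
  ∑ j, fderiv ℝ v y (EuclideanSpace.single j 1) j

section Helpers

variable {n : ℕ}

lemma grad_inner (φ : EuclideanSpace ℝ (Fin n) → ℝ) (x v : EuclideanSpace ℝ (Fin n)) :
    ⟪gradient φ x, v⟫ = fderiv ℝ φ x v := by
  rw [gradient, InnerProductSpace.toDual_symm_apply]

lemma grad_apply (φ : EuclideanSpace ℝ (Fin n) → ℝ) (x : EuclideanSpace ℝ (Fin n)) (j : Fin n) :
    gradient φ x j = fderiv ℝ φ x (EuclideanSpace.single j 1) := by
  rw [← grad_inner φ x (EuclideanSpace.single j 1), real_inner_comm,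
    EuclideanSpace.inner_single_left]
  simp

lemma inner_grad_sum (φ ψ : EuclideanSpace ℝ (Fin n) → ℝ) (x : EuclideanSpace ℝ (Fin n)) :
    ⟪gradient φ x, gradient ψ x⟫ =
      ∑ j, fderiv ℝ φ x (EuclideanSpace.single j 1) * fderiv ℝ ψ x (EuclideanSpace.single j 1) := by
  rw [PiLp.inner_apply]
  refine Finset.sum_congr rfl fun j _ => ?_
  rw [grad_apply, grad_apply]; simp [mul_comm]

lemma norm_grad_sq (φ : EuclideanSpace ℝ (Fin n) → ℝ) (x : EuclideanSpace ℝ (Fin n)) :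
    ‖gradient φ x‖ ^ 2 = ∑ j, fderiv ℝ φ x (EuclideanSpace.single j 1) ^ 2 := by
  rw [← real_inner_self_eq_norm_sq, inner_grad_sum]
  refine Finset.sum_congr rfl fun j _ => (sq _).symm

lemma contDiff_pd {φ : EuclideanSpace ℝ (Fin n) → ℝ} (hφ : ContDiff ℝ (⊤ : ℕ∞) φ) (j : Fin n) :
    ContDiff ℝ (⊤ : ℕ∞) (fun z => fderiv ℝ φ z (EuclideanSpace.single j 1)) :=
  (hφ.fderiv_right (by simp)).clm_apply contDiff_const

lemma pd_mul {φ ψ : EuclideanSpace ℝ (Fin n) → ℝ} {y : EuclideanSpace ℝ (Fin n)}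
    (hφ : DifferentiableAt ℝ φ y) (hψ : DifferentiableAt ℝ ψ y) (v : EuclideanSpace ℝ (Fin n)) :
    fderiv ℝ (fun z => φ z * ψ z) y v
      = fderiv ℝ φ y v * ψ y + φ y * fderiv ℝ ψ y v := by
  rw [fderiv_fun_mul hφ hψ]
  simp [smul_eq_mul]; ring

lemma pd_comp {φ : EuclideanSpace ℝ (Fin n) → ℝ} {y : EuclideanSpace ℝ (Fin n)}
    {r : ℝ → ℝ} {c : ℝ} (h : HasDerivAt r c (φ y)) (hφ : DifferentiableAt ℝ φ y)
    (v : EuclideanSpace ℝ (Fin n)) :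
    fderiv ℝ (fun z => r (φ z)) y v = c * fderiv ℝ φ y v := by
  rw [show (fun z => r (φ z)) = r ∘ φ from rfl,
    (h.comp_hasFDerivAt y hφ.hasFDerivAt).fderiv]
  simp [smul_eq_mul]

lemma pd_add {φ ψ : EuclideanSpace ℝ (Fin n) → ℝ} {y : EuclideanSpace ℝ (Fin n)}
    (hφ : DifferentiableAt ℝ φ y) (hψ : DifferentiableAt ℝ ψ y) (v : EuclideanSpace ℝ (Fin n)) :
    fderiv ℝ (fun z => φ z + ψ z) y v = fderiv ℝ φ y v + fderiv ℝ ψ y v := by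
  rw [fderiv_fun_add hφ hψ]; rfl

lemma pd_sub {φ ψ : EuclideanSpace ℝ (Fin n) → ℝ} {y : EuclideanSpace ℝ (Fin n)}
    (hφ : DifferentiableAt ℝ φ y) (hψ : DifferentiableAt ℝ ψ y) (v : EuclideanSpace ℝ (Fin n)) :
    fderiv ℝ (fun z => φ z - ψ z) y v = fderiv ℝ φ y v - fderiv ℝ ψ y v := by
  rw [fderiv_fun_sub hφ hψ]; rfl

lemma pd_neg (φ : EuclideanSpace ℝ (Fin n) → ℝ) (y v : EuclideanSpace ℝ (Fin n)) :
    fderiv ℝ (fun z => -φ z) y v = -fderiv ℝ φ y v := by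
  rw [fderiv_fun_neg]; rfl

lemma pd_const_mul {φ : EuclideanSpace ℝ (Fin n) → ℝ} {y : EuclideanSpace ℝ (Fin n)}
    (hφ : DifferentiableAt ℝ φ y) (c : ℝ) (v : EuclideanSpace ℝ (Fin n)) :
    fderiv ℝ (fun z => c * φ z) y v = c * fderiv ℝ φ y v := by
  rw [fderiv_const_mul hφ]; rfl

lemma pd_div_const {φ : EuclideanSpace ℝ (Fin n) → ℝ} {y : EuclideanSpace ℝ (Fin n)}
    (hφ : DifferentiableAt ℝ φ y) (c : ℝ) (v : EuclideanSpace ℝ (Fin n)) :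
    fderiv ℝ (fun z => φ z / c) y v = fderiv ℝ φ y v / c := by
  simp only [div_eq_mul_inv]
  rw [show (fun z => φ z * c⁻¹) = fun z => c⁻¹ * φ z from funext fun z => mul_comm _ _,
    pd_const_mul hφ]
  ring

lemma pd_log {φ : EuclideanSpace ℝ (Fin n) → ℝ} {y : EuclideanSpace ℝ (Fin n)}
    (hφ : DifferentiableAt ℝ φ y) (hpos : 0 < φ y) (v : EuclideanSpace ℝ (Fin n)) :
    fderiv ℝ (fun z => Real.log (φ z)) y v = (φ y)⁻¹ * fderiv ℝ φ y v :=
  pd_comp (Real.hasDerivAt_log hpos.ne') hφ v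

lemma pd_exp {φ : EuclideanSpace ℝ (Fin n) → ℝ} {y : EuclideanSpace ℝ (Fin n)}
    (hφ : DifferentiableAt ℝ φ y) (v : EuclideanSpace ℝ (Fin n)) :
    fderiv ℝ (fun z => Real.exp (φ z)) y v = Real.exp (φ y) * fderiv ℝ φ y v :=
  pd_comp (Real.hasDerivAt_exp (φ y)) hφ v

lemma pd_inv {φ : EuclideanSpace ℝ (Fin n) → ℝ} {y : EuclideanSpace ℝ (Fin n)}
    (hφ : DifferentiableAt ℝ φ y) (hpos : φ y ≠ 0) (v : EuclideanSpace ℝ (Fin n)) :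
    fderiv ℝ (fun z => (φ z)⁻¹) y v = -((φ y)^2)⁻¹ * fderiv ℝ φ y v :=
  pd_comp (hasDerivAt_inv hpos) hφ v

lemma contDiff_log_comp {φ : EuclideanSpace ℝ (Fin n) → ℝ} (hφ : ContDiff ℝ (⊤ : ℕ∞) φ)
    (hpos : ∀ z, 0 < φ z) : ContDiff ℝ (⊤ : ℕ∞) (fun z => Real.log (φ z)) :=
  contDiff_iff_contDiffAt.2 fun z => (hφ.contDiffAt).log (hpos z).ne'

lemma sum_single_apply (d : Fin n → ℝ) (j : Fin n) :
    (∑ i, d i • (EuclideanSpace.single i 1 : EuclideanSpace ℝ (Fin n))) j = d j := by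
  have h : ((∑ i, d i • (EuclideanSpace.single i 1 : EuclideanSpace ℝ (Fin n)))) j
      = ⟪(EuclideanSpace.single j 1 : EuclideanSpace ℝ (Fin n)),
          ∑ i, d i • (EuclideanSpace.single i 1 : EuclideanSpace ℝ (Fin n))⟫ := by
    rw [EuclideanSpace.inner_single_left]; simp
  rw [h, inner_sum]
  simp [real_inner_smul_right, EuclideanSpace.inner_single_left, EuclideanSpace.single_apply]

lemma sum_single_repr (x : EuclideanSpace ℝ (Fin n)) :
    ∑ i, x i • (EuclideanSpace.single i 1 : EuclideanSpace ℝ (Fin n)) = x := by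
  simpa [EuclideanSpace.basisFun_apply, EuclideanSpace.basisFun_repr] using
    (EuclideanSpace.basisFun (Fin n) ℝ).sum_repr x

lemma divg_smul_grad (q θ : EuclideanSpace ℝ (Fin n) → ℝ)
    (hq : ContDiff ℝ (⊤ : ℕ∞) q) (hθ : ContDiff ℝ (⊤ : ℕ∞) θ) (y : EuclideanSpace ℝ (Fin n)) :
    divg (fun z => q z • gradient θ z) y
      = ∑ j, fderiv ℝ (fun z => q z * fderiv ℝ θ z (EuclideanSpace.single j 1)) y
          (EuclideanSpace.single j 1) := by
  have hrepr : (fun z => q z • gradient θ z)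
      = fun z => ∑ i, (q z * fderiv ℝ θ z (EuclideanSpace.single i 1)) •
          (EuclideanSpace.single i 1 : EuclideanSpace ℝ (Fin n)) := by
    funext z
    rw [← sum_single_repr (q z • gradient θ z)]
    refine Finset.sum_congr rfl fun i _ => ?_
    rw [PiLp.smul_apply, grad_apply, smul_eq_mul]
  have hdiff : ∀ i : Fin n, DifferentiableAt ℝ
      (fun z => q z * fderiv ℝ θ z (EuclideanSpace.single i 1)) y :=
    fun i => ((hq.differentiable (by simp)) y).mul (((contDiff_pd hθ i).differentiable (by simp)) y)
  rw [divg, hrepr]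
  refine Finset.sum_congr rfl fun j _ => ?_
  rw [fderiv_fun_sum (fun i _ => (hdiff i).smul_const _)]
  rw [ContinuousLinearMap.sum_apply]
  have heach : ∀ i : Fin n, fderiv ℝ
      (fun z => (q z * fderiv ℝ θ z (EuclideanSpace.single i 1)) •
        (EuclideanSpace.single i 1 : EuclideanSpace ℝ (Fin n))) y (EuclideanSpace.single j 1)
      = (fderiv ℝ (fun z => q z * fderiv ℝ θ z (EuclideanSpace.single i 1)) y
          (EuclideanSpace.single j 1)) • (EuclideanSpace.single i 1 : EuclideanSpace ℝ (Fin n)) := by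
    intro i
    rw [fderiv_smul_const (hdiff i)]
    rfl
  simp only [heach]
  rw [sum_single_apply]

lemma lap_exp (a : EuclideanSpace ℝ (Fin n) → ℝ) (ha : ContDiff ℝ (⊤ : ℕ∞) a)
    (y : EuclideanSpace ℝ (Fin n)) :
    lap (fun z => Real.exp (a z)) y
      = ∑ j, Real.exp (a y) * ((fderiv ℝ a y (EuclideanSpace.single j 1))^2
          + fderiv ℝ (fun z => fderiv ℝ a z (EuclideanSpace.single j 1)) y
              (EuclideanSpace.single j 1)) := by
  rw [lap]
  refine Finset.sum_congr rfl fun j _ => ?_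
  have h1 : (fun z => fderiv ℝ (fun w => Real.exp (a w)) z (EuclideanSpace.single j 1))
      = fun z => Real.exp (a z) * fderiv ℝ a z (EuclideanSpace.single j 1) :=
    funext fun z => pd_exp ((ha.differentiable (by simp)) z) _
  rw [h1, pd_mul (((ha.differentiable (by simp)) y).exp)
      (((contDiff_pd ha j).differentiable (by simp)) y), pd_exp ((ha.differentiable (by simp)) y)]
  ring

lemma neg_lap_exp_div (a : EuclideanSpace ℝ (Fin n) → ℝ) (ha : ContDiff ℝ (⊤ : ℕ∞) a)
    (y : EuclideanSpace ℝ (Fin n)) :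
    -lap (fun z => Real.exp (a z)) y / (2 * Real.exp (a y))
      = ∑ j, (-1/2) * ((fderiv ℝ a y (EuclideanSpace.single j 1))^2
          + fderiv ℝ (fun z => fderiv ℝ a z (EuclideanSpace.single j 1)) y
              (EuclideanSpace.single j 1)) := by
  rw [lap_exp a ha y, ← Finset.mul_sum, ← Finset.mul_sum]
  have : Real.exp (a y) ≠ 0 := (Real.exp_pos _).ne'
  field_simp

end Helpers

set_option maxHeartbeats 2000000 in
/-- Corollary following Proposition 8.4, eq. (86b), of the paper. With the
setup of Proposition 8.4 (`A^m φ = (−∇U·∇φ + εΔφ)/2`, `f, g` smooth positive solutions of the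
backward/forward parabolic equations, `m = exp(−U/ε)`, `q = f g m`,
`θ = (ε/2)(log g − log f)`), on `[t0,t1] × ℝ^n` one has `∂_t q + ∇·(q ∇θ) = 0` and
`∂_t θ + ‖∇θ‖²/2 + V − ε² (Q(q|Leb) − Q(m|Leb)) = 0`, where `Q(q|Leb) = −Δ√q/(2√q)` and
`Q(m|Leb) = −Δ√m/(2√m)`. -/
theorem statement17 {n : ℕ} (ε : ℝ) (hε : 0 < ε) (t0 t1 : ℝ) (ht : t0 < t1)
    (U : EuclideanSpace ℝ (Fin n) → ℝ) (hU : ContDiff ℝ (⊤ : ℕ∞) U)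
    (V f g : ℝ → EuclideanSpace ℝ (Fin n) → ℝ)
    (hV : ContDiffOn ℝ (⊤ : ℕ∞) (fun p : ℝ × EuclideanSpace ℝ (Fin n) => V p.1 p.2)
      (Set.Icc t0 t1 ×ˢ Set.univ))
    (hf : ContDiffOn ℝ (⊤ : ℕ∞) (fun p : ℝ × EuclideanSpace ℝ (Fin n) => f p.1 p.2)
      (Set.Icc t0 t1 ×ˢ Set.univ))
    (hg : ContDiffOn ℝ (⊤ : ℕ∞) (fun p : ℝ × EuclideanSpace ℝ (Fin n) => g p.1 p.2)
      (Set.Icc t0 t1 ×ˢ Set.univ))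
    (hfpos : ∀ t ∈ Set.Icc t0 t1, ∀ y, 0 < f t y)
    (hgpos : ∀ t ∈ Set.Icc t0 t1, ∀ y, 0 < g t y)
    (hfpde : ∀ t ∈ Set.Icc t0 t1, ∀ y,
      -derivWithin (fun s => f s y) (Set.Icc t0 t1) t
        + (-⟪gradient U y, gradient (f t) y⟫ + ε * lap (f t) y) / 2
        + (V t y / ε) * f t y = 0)
    (hgpde : ∀ t ∈ Set.Icc t0 t1, ∀ y,
      derivWithin (fun s => g s y) (Set.Icc t0 t1) t
        + (-⟪gradient U y, gradient (g t) y⟫ + ε * lap (g t) y) / 2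
        + (V t y / ε) * g t y = 0)
    (m : EuclideanSpace ℝ (Fin n) → ℝ) (hm : m = fun y => Real.exp (-U y / ε))
    (q θ : ℝ → EuclideanSpace ℝ (Fin n) → ℝ)
    (hq : q = fun t y => f t y * g t y * m y)
    (hθ : θ = fun t y => (ε / 2) * (Real.log (g t y) - Real.log (f t y))) :
    ∀ t ∈ Set.Icc t0 t1, ∀ y,
      (derivWithin (fun s => q s y) (Set.Icc t0 t1) t
          + divg (fun z => q t z • gradient (θ t) z) y = 0)
      ∧ (derivWithin (fun s => θ s y) (Set.Icc t0 t1) t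
          + ‖gradient (θ t) y‖ ^ 2 / 2 + V t y
          - ε ^ 2 * ((-lap (fun z => Real.sqrt (q t z)) y / (2 * Real.sqrt (q t y)))
              - (-lap (fun z => Real.sqrt (m z)) y / (2 * Real.sqrt (m y)))) = 0) := by
  intro t htI y
  have hεne : ε ≠ 0 := hε.ne'
  -- spatial smoothness at fixed time t
  have cF : ContDiff ℝ (⊤ : ℕ∞) (f t) := by
    rw [← contDiffOn_univ]
    exact hf.comp ((contDiff_const.prodMk contDiff_id).contDiffOn)
      (fun z _ => Set.mk_mem_prod htI trivial)
  have cG : ContDiff ℝ (⊤ : ℕ∞) (g t) := by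
    rw [← contDiffOn_univ]
    exact hg.comp ((contDiff_const.prodMk contDiff_id).contDiffOn)
      (fun z _ => Set.mk_mem_prod htI trivial)
  have cM : ContDiff ℝ (⊤ : ℕ∞) (fun z => Real.exp (-U z / ε)) := ((hU.neg).div_const ε).exp
  have PF : ∀ z, 0 < f t z := hfpos t htI
  have PG : ∀ z, 0 < g t z := hgpos t htI
  have dF : ∀ z, DifferentiableAt ℝ (f t) z := fun z => (cF.differentiable (by simp)) z
  have dG : ∀ z, DifferentiableAt ℝ (g t) z := fun z => (cG.differentiable (by simp)) z
  have dU : ∀ z, DifferentiableAt ℝ U z := fun z => (hU.differentiable (by simp)) z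
  have dM : ∀ z, DifferentiableAt ℝ (fun w => Real.exp (-U w / ε)) z :=
    fun z => (cM.differentiable (by simp)) z
  have dpF : ∀ (j : Fin n) z, DifferentiableAt ℝ
      (fun w => fderiv ℝ (f t) w (EuclideanSpace.single j 1)) z :=
    fun j z => ((contDiff_pd cF j).differentiable (by simp)) z
  have dpG : ∀ (j : Fin n) z, DifferentiableAt ℝ
      (fun w => fderiv ℝ (g t) w (EuclideanSpace.single j 1)) z :=
    fun j z => ((contDiff_pd cG j).differentiable (by simp)) z
  have dpU : ∀ (j : Fin n) z, DifferentiableAt ℝ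
      (fun w => fderiv ℝ U w (EuclideanSpace.single j 1)) z :=
    fun j z => ((contDiff_pd hU j).differentiable (by simp)) z
  have dUen : ∀ z, DifferentiableAt ℝ (fun w => -U w / ε) z :=
    fun z => by exact ((dU z).fun_neg).mul_const ε⁻¹
  have dpUen : ∀ (j : Fin n) (z), DifferentiableAt ℝ
      (fun w => -fderiv ℝ U w (EuclideanSpace.single j 1) / ε) z :=
    fun j z => by exact ((dpU j z).fun_neg).mul_const ε⁻¹
  have clogF : ContDiff ℝ (⊤ : ℕ∞) (fun z => Real.log (f t z)) := contDiff_log_comp cF PF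
  have clogG : ContDiff ℝ (⊤ : ℕ∞) (fun z => Real.log (g t z)) := contDiff_log_comp cG PG
  have dinvF : ∀ z, DifferentiableAt ℝ (fun w => (f t w)⁻¹) z :=
    fun z => (dF z).inv (PF z).ne'
  have dinvG : ∀ z, DifferentiableAt ℝ (fun w => (g t w)⁻¹) z :=
    fun z => (dG z).inv (PG z).ne'
  -- time derivatives
  have huniq : UniqueDiffWithinAt ℝ (Set.Icc t0 t1) t := uniqueDiffOn_Icc ht t htI
  have hftc : ContDiffOn ℝ (⊤ : ℕ∞) (fun s => f s y) (Set.Icc t0 t1) :=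
    hf.comp ((contDiff_id.prodMk contDiff_const).contDiffOn)
      (fun s hs => Set.mk_mem_prod hs trivial)
  have hgtc : ContDiffOn ℝ (⊤ : ℕ∞) (fun s => g s y) (Set.Icc t0 t1) :=
    hg.comp ((contDiff_id.prodMk contDiff_const).contDiffOn)
      (fun s hs => Set.mk_mem_prod hs trivial)
  have hfd : DifferentiableWithinAt ℝ (fun s => f s y) (Set.Icc t0 t1) t :=
    (hftc.differentiableOn (by simp)) t htI
  have hgd : DifferentiableWithinAt ℝ (fun s => g s y) (Set.Icc t0 t1) t :=
    (hgtc.differentiableOn (by simp)) t htI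
  -- PDE instances, with inner products and laplacians written as coordinate sums
  have HF := hfpde t htI y
  have HG := hgpde t htI y
  rw [inner_grad_sum, lap] at HF HG
  constructor
  · -- continuity equation
    simp only [hq, hθ, hm]
    have hdq : derivWithin (fun s => f s y * g s y * Real.exp (-U y / ε)) (Set.Icc t0 t1) t
        = (derivWithin (fun s => f s y) (Set.Icc t0 t1) t * g t y
            + f t y * derivWithin (fun s => g s y) (Set.Icc t0 t1) t) * Real.exp (-U y / ε) := by
      rw [derivWithin_mul_const (hfd.fun_mul hgd), derivWithin_fun_mul hfd hgd]
    rw [hdq, divg_smul_grad _ _ ((cF.mul cG).mul cM)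
      (contDiff_const.mul (clogG.sub clogF)) y]
    have hsum : (∑ j, fderiv ℝ (fun z => (f t z * g t z * Real.exp (-U z / ε)) *
          fderiv ℝ (fun w => ε / 2 * (Real.log (g t w) - Real.log (f t w))) z
            (EuclideanSpace.single j 1)) y (EuclideanSpace.single j 1))
        = ∑ j,
          ((-(Real.exp (-U y / ε) * f t y) / 2)
            * (fderiv ℝ U y (EuclideanSpace.single j 1)
                * fderiv ℝ (g t) y (EuclideanSpace.single j 1))
          + (Real.exp (-U y / ε) * f t y * ε / 2)
            * fderiv ℝ (fun z => fderiv ℝ (g t) z (EuclideanSpace.single j 1)) y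
                (EuclideanSpace.single j 1)
          + ((Real.exp (-U y / ε) * g t y) / 2)
            * (fderiv ℝ U y (EuclideanSpace.single j 1)
                * fderiv ℝ (f t) y (EuclideanSpace.single j 1))
          + (-(Real.exp (-U y / ε) * g t y * ε) / 2)
            * fderiv ℝ (fun z => fderiv ℝ (f t) z (EuclideanSpace.single j 1)) y
                (EuclideanSpace.single j 1)) := by
      refine Finset.sum_congr rfl fun j _ => ?_
      have hθpd : (fun z => fderiv ℝ (fun w => ε / 2 * (Real.log (g t w) - Real.log (f t w))) z
            (EuclideanSpace.single j 1))
          = fun z => ε / 2 * ((g t z)⁻¹ * fderiv ℝ (g t) z (EuclideanSpace.single j 1)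
              - (f t z)⁻¹ * fderiv ℝ (f t) z (EuclideanSpace.single j 1)) := by
        funext z
        rw [pd_const_mul (((clogG.differentiable (by simp)) z).fun_sub ((clogF.differentiable (by simp)) z)),
          pd_sub ((clogG.differentiable (by simp)) z) ((clogF.differentiable (by simp)) z),
          pd_log (dG z) (PG z), pd_log (dF z) (PF z)]
      have hrw : (fun z => (f t z * g t z * Real.exp (-U z / ε)) *
            fderiv ℝ (fun w => ε / 2 * (Real.log (g t w) - Real.log (f t w))) z
              (EuclideanSpace.single j 1))
          = fun z => (f t z * g t z * Real.exp (-U z / ε)) *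
              (ε / 2 * ((g t z)⁻¹ * fderiv ℝ (g t) z (EuclideanSpace.single j 1)
                - (f t z)⁻¹ * fderiv ℝ (f t) z (EuclideanSpace.single j 1))) :=
        funext fun z => congrArg _ (congrFun hθpd z)
      rw [hrw]
      have dΦ : DifferentiableAt ℝ (fun z =>
          ε / 2 * ((g t z)⁻¹ * fderiv ℝ (g t) z (EuclideanSpace.single j 1)
            - (f t z)⁻¹ * fderiv ℝ (f t) z (EuclideanSpace.single j 1))) y :=
        (differentiableAt_const _).fun_mul (((dinvG y).fun_mul (dpG j y)).fun_sub ((dinvF y).fun_mul (dpF j y)))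
      rw [pd_mul (((dF y).fun_mul (dG y)).fun_mul (dM y)) dΦ,
        pd_mul ((dF y).fun_mul (dG y)) (dM y), pd_mul (dF y) (dG y)]
      have hM : fderiv ℝ (fun z => Real.exp (-U z / ε)) y (EuclideanSpace.single j 1)
          = Real.exp (-U y / ε) * (-fderiv ℝ U y (EuclideanSpace.single j 1) / ε) := by
        rw [pd_exp (dUen y), pd_div_const ((dU y).fun_neg), pd_neg]
      rw [hM,
        pd_const_mul (((dinvG y).fun_mul (dpG j y)).fun_sub ((dinvF y).fun_mul (dpF j y))),
        pd_sub ((dinvG y).fun_mul (dpG j y)) ((dinvF y).fun_mul (dpF j y)),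
        pd_mul (dinvG y) (dpG j y), pd_mul (dinvF y) (dpF j y),
        pd_inv (dG y) (PG y).ne', pd_inv (dF y) (PF y).ne']
      have hF0 : f t y ≠ 0 := (PF y).ne'
      have hG0 : g t y ≠ 0 := (PG y).ne'
      field_simp
      ring
    rw [hsum]
    simp only [Finset.sum_add_distrib, ← Finset.mul_sum]
    linear_combination (Real.exp (-U y / ε) * f t y) * HG - (Real.exp (-U y / ε) * g t y) * HF
  · -- Hamilton-Jacobi equation
    simp only [hq, hθ, hm]
    have hdθ : derivWithin (fun s => ε / 2 * (Real.log (g s y) - Real.log (f s y)))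
          (Set.Icc t0 t1) t
        = ε / 2 * ((g t y)⁻¹ * derivWithin (fun s => g s y) (Set.Icc t0 t1) t
            - (f t y)⁻¹ * derivWithin (fun s => f s y) (Set.Icc t0 t1) t) := by
      have hlg : HasDerivWithinAt (fun s => Real.log (g s y))
          ((g t y)⁻¹ * derivWithin (fun s => g s y) (Set.Icc t0 t1) t) (Set.Icc t0 t1) t :=
        (Real.hasDerivAt_log (PG y).ne').comp_hasDerivWithinAt (h₂ := Real.log) t hgd.hasDerivWithinAt
      have hlf : HasDerivWithinAt (fun s => Real.log (f s y))
          ((f t y)⁻¹ * derivWithin (fun s => f s y) (Set.Icc t0 t1) t) (Set.Icc t0 t1) t :=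
        (Real.hasDerivAt_log (PF y).ne').comp_hasDerivWithinAt (h₂ := Real.log) t hfd.hasDerivWithinAt
      rw [derivWithin_const_mul _
          (hlg.differentiableWithinAt.fun_sub hlf.differentiableWithinAt),
        derivWithin_fun_sub hlg.differentiableWithinAt hlf.differentiableWithinAt,
        hlg.derivWithin huniq, hlf.derivWithin huniq]
    rw [hdθ, norm_grad_sq]
    -- rewrite square roots as exponentials
    have hsqz : ∀ z, Real.sqrt (f t z * g t z * Real.exp (-U z / ε))
        = Real.exp ((Real.log (f t z) + Real.log (g t z) + -U z / ε) / 2) := by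
      intro z
      have h1 : (0:ℝ) < f t z * g t z := mul_pos (PF z) (PG z)
      have h2 : (0:ℝ) < f t z * g t z * Real.exp (-U z / ε) := mul_pos h1 (Real.exp_pos _)
      rw [Real.sqrt_eq_rpow, Real.rpow_def_of_pos h2,
        Real.log_mul h1.ne' (Real.exp_pos _).ne', Real.log_mul (PF z).ne' (PG z).ne',
        Real.log_exp]
      exact congrArg Real.exp (by ring)
    have hsmz : ∀ z, Real.sqrt (Real.exp (-U z / ε)) = Real.exp ((-U z / ε) / 2) := by
      intro z
      rw [Real.sqrt_eq_rpow, Real.rpow_def_of_pos (Real.exp_pos _), Real.log_exp]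
      exact congrArg Real.exp (by ring)
    rw [show (fun z => Real.sqrt (f t z * g t z * Real.exp (-U z / ε)))
        = fun z => Real.exp ((Real.log (f t z) + Real.log (g t z) + -U z / ε) / 2)
      from funext hsqz]
    rw [show (fun z => Real.sqrt (Real.exp (-U z / ε)))
        = fun z => Real.exp ((-U z / ε) / 2) from funext hsmz]
    rw [hsqz y, hsmz y]
    have caq : ContDiff ℝ (⊤ : ℕ∞) (fun z => (Real.log (f t z) + Real.log (g t z) + -U z / ε) / 2) :=
      ((clogF.add clogG).add ((hU.neg).div_const ε)).div_const 2
    have cam : ContDiff ℝ (⊤ : ℕ∞) (fun z => (-U z / ε) / 2) :=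
      ((hU.neg).div_const ε).div_const 2
    rw [neg_lap_exp_div _ caq y, neg_lap_exp_div _ cam y]
    -- linearize each coordinate sum
    have dsum : ∀ z, DifferentiableAt ℝ
        (fun w => Real.log (f t w) + Real.log (g t w) + -U w / ε) z :=
      fun z => (((clogF.differentiable (by simp)) z).fun_add ((clogG.differentiable (by simp)) z)).add
        (dUen z)
    -- first sum : ‖∇θ‖² coordinates
    have hX : (∑ j, fderiv ℝ (fun w => ε / 2 * (Real.log (g t w) - Real.log (f t w))) y
          (EuclideanSpace.single j 1) ^ 2)
        = ∑ j,
          ((ε^2 / 4 * ((g t y)^2)⁻¹) * fderiv ℝ (g t) y (EuclideanSpace.single j 1) ^ 2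
          + (-(ε^2 / 2) * (f t y * g t y)⁻¹)
            * (fderiv ℝ (f t) y (EuclideanSpace.single j 1)
                * fderiv ℝ (g t) y (EuclideanSpace.single j 1))
          + (ε^2 / 4 * ((f t y)^2)⁻¹) * fderiv ℝ (f t) y (EuclideanSpace.single j 1) ^ 2) := by
      refine Finset.sum_congr rfl fun j _ => ?_
      rw [pd_const_mul (((clogG.differentiable (by simp)) y).fun_sub ((clogF.differentiable (by simp)) y)),
        pd_sub ((clogG.differentiable (by simp)) y) ((clogF.differentiable (by simp)) y),
        pd_log (dG y) (PG y), pd_log (dF y) (PF y)]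
      have hF0 : f t y ≠ 0 := (PF y).ne'
      have hG0 : g t y ≠ 0 := (PG y).ne'
      field_simp
      ring
    rw [hX]
    -- second sum : quantum potential of q coordinates
    have hYq : (∑ j, (-1/2 : ℝ) *
          ((fderiv ℝ (fun z => (Real.log (f t z) + Real.log (g t z) + -U z / ε) / 2) y
              (EuclideanSpace.single j 1))^2
            + fderiv ℝ (fun z =>
                fderiv ℝ (fun w => (Real.log (f t w) + Real.log (g t w) + -U w / ε) / 2) z
                  (EuclideanSpace.single j 1)) y (EuclideanSpace.single j 1)))
        = ∑ j,
          ((1/8 * ((f t y)^2)⁻¹) * fderiv ℝ (f t) y (EuclideanSpace.single j 1) ^ 2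
          + (1/8 * ((g t y)^2)⁻¹) * fderiv ℝ (g t) y (EuclideanSpace.single j 1) ^ 2
          + (-(1/8) * (ε^2)⁻¹) * fderiv ℝ U y (EuclideanSpace.single j 1) ^ 2
          + (-(1/4) * (f t y * g t y)⁻¹)
            * (fderiv ℝ (f t) y (EuclideanSpace.single j 1)
                * fderiv ℝ (g t) y (EuclideanSpace.single j 1))
          + (1/(4*ε) * (f t y)⁻¹)
            * (fderiv ℝ U y (EuclideanSpace.single j 1)
                * fderiv ℝ (f t) y (EuclideanSpace.single j 1))
          + (1/(4*ε) * (g t y)⁻¹)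
            * (fderiv ℝ U y (EuclideanSpace.single j 1)
                * fderiv ℝ (g t) y (EuclideanSpace.single j 1))
          + (-(1/4) * (f t y)⁻¹)
            * fderiv ℝ (fun z => fderiv ℝ (f t) z (EuclideanSpace.single j 1)) y
                (EuclideanSpace.single j 1)
          + (-(1/4) * (g t y)⁻¹)
            * fderiv ℝ (fun z => fderiv ℝ (g t) z (EuclideanSpace.single j 1)) y
                (EuclideanSpace.single j 1)
          + (1/(4*ε))
            * fderiv ℝ (fun z => fderiv ℝ U z (EuclideanSpace.single j 1)) y
                (EuclideanSpace.single j 1)) := by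
      refine Finset.sum_congr rfl fun j _ => ?_
      have hpda : (fun z =>
            fderiv ℝ (fun w => (Real.log (f t w) + Real.log (g t w) + -U w / ε) / 2) z
              (EuclideanSpace.single j 1))
          = fun z => ((f t z)⁻¹ * fderiv ℝ (f t) z (EuclideanSpace.single j 1)
              + (g t z)⁻¹ * fderiv ℝ (g t) z (EuclideanSpace.single j 1)
              + -fderiv ℝ U z (EuclideanSpace.single j 1) / ε) / 2 := by
        funext z
        rw [pd_div_const (dsum z), pd_add (((clogF.differentiable (by simp)) z).fun_add
            ((clogG.differentiable (by simp)) z)) (dUen z),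
          pd_add ((clogF.differentiable (by simp)) z) ((clogG.differentiable (by simp)) z),
          pd_log (dF z) (PF z), pd_log (dG z) (PG z), pd_div_const ((dU z).fun_neg), pd_neg]
      have hval : fderiv ℝ (fun w => (Real.log (f t w) + Real.log (g t w) + -U w / ε) / 2) y
            (EuclideanSpace.single j 1)
          = ((f t y)⁻¹ * fderiv ℝ (f t) y (EuclideanSpace.single j 1)
              + (g t y)⁻¹ * fderiv ℝ (g t) y (EuclideanSpace.single j 1)
              + -fderiv ℝ U y (EuclideanSpace.single j 1) / ε) / 2 := by
        simpa using congrFun hpda y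
      rw [hval, hpda]
      have dsum2 : DifferentiableAt ℝ (fun z =>
          (f t z)⁻¹ * fderiv ℝ (f t) z (EuclideanSpace.single j 1)
            + (g t z)⁻¹ * fderiv ℝ (g t) z (EuclideanSpace.single j 1)
            + -fderiv ℝ U z (EuclideanSpace.single j 1) / ε) y :=
        (((dinvF y).fun_mul (dpF j y)).fun_add ((dinvG y).fun_mul (dpG j y))).fun_add (dpUen j y)
      rw [pd_div_const dsum2,
        pd_add (((dinvF y).fun_mul (dpF j y)).fun_add ((dinvG y).fun_mul (dpG j y))) (dpUen j y),
        pd_add ((dinvF y).fun_mul (dpF j y)) ((dinvG y).fun_mul (dpG j y)),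
        pd_mul (dinvF y) (dpF j y), pd_mul (dinvG y) (dpG j y),
        pd_inv (dF y) (PF y).ne', pd_inv (dG y) (PG y).ne',
        pd_div_const ((dpU j y).fun_neg), pd_neg]
      have hF0 : f t y ≠ 0 := (PF y).ne'
      have hG0 : g t y ≠ 0 := (PG y).ne'
      field_simp
      ring
    rw [hYq]
    -- third sum : quantum potential of m coordinates
    have hYm : (∑ j, (-1/2 : ℝ) *
          ((fderiv ℝ (fun z => (-U z / ε) / 2) y (EuclideanSpace.single j 1))^2
            + fderiv ℝ (fun z => fderiv ℝ (fun w => (-U w / ε) / 2) z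
                (EuclideanSpace.single j 1)) y (EuclideanSpace.single j 1)))
        = ∑ j,
          ((-(1/8) * (ε^2)⁻¹) * fderiv ℝ U y (EuclideanSpace.single j 1) ^ 2
          + (1/(4*ε))
            * fderiv ℝ (fun z => fderiv ℝ U z (EuclideanSpace.single j 1)) y
                (EuclideanSpace.single j 1)) := by
      refine Finset.sum_congr rfl fun j _ => ?_
      have hpda : (fun z => fderiv ℝ (fun w => (-U w / ε) / 2) z (EuclideanSpace.single j 1))
          = fun z => (-fderiv ℝ U z (EuclideanSpace.single j 1) / ε) / 2 := by
        funext z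
        rw [pd_div_const (dUen z), pd_div_const ((dU z).fun_neg), pd_neg]
      rw [hpda, pd_div_const (dpUen j y), pd_div_const ((dpU j y).fun_neg), pd_neg,
        pd_div_const (dUen y), pd_div_const ((dU y).fun_neg), pd_neg]
      field_simp
      ring
    rw [hYm]
    simp only [Finset.sum_add_distrib, ← Finset.mul_sum]
    have hF0 : f t y ≠ 0 := (PF y).ne'
    have hG0 : g t y ≠ 0 := (PG y).ne'
    have hf' : derivWithin (fun s => f s y) (Set.Icc t0 t1) t
        = (-∑ j, fderiv ℝ U y (EuclideanSpace.single j 1)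
              * fderiv ℝ (f t) y (EuclideanSpace.single j 1)
            + ε * ∑ j, fderiv ℝ (fun z => fderiv ℝ (f t) z (EuclideanSpace.single j 1)) y
                (EuclideanSpace.single j 1)) / 2
          + V t y / ε * f t y := by linear_combination -HF
    have hg' : derivWithin (fun s => g s y) (Set.Icc t0 t1) t
        = -((-∑ j, fderiv ℝ U y (EuclideanSpace.single j 1)
              * fderiv ℝ (g t) y (EuclideanSpace.single j 1)
            + ε * ∑ j, fderiv ℝ (fun z => fderiv ℝ (g t) z (EuclideanSpace.single j 1)) y
                (EuclideanSpace.single j 1)) / 2)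
          - V t y / ε * g t y := by linear_combination HG
    rw [hf', hg']
    field_simp
    ring

end
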